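/- Assume sup_{n≥1}l_n<∞ and let α_l:=log(2l−1)/log l. Then there exist constants c_1,c_2>0 such that for all 0<r<R≤2, c_1·(R/r)^{inf_{n≥1}α_{l_n}} ≤ ψ(R)/ψ(r) ≤ c_2·(R/r)^{sup_{n≥1}α_{l_n}}. -/

import Mathlib

open Complex MeasureTheory Metric Set Filter Topology
open scoped ENNReal

noncomputable section

/-- The five reference points `q₀ = 0`, `q_j = exp((2j-1)πi/4)`. -/
def qpt (j : Fin 5) : ℂ :=
  if j = 0 then 0
  else Complex.exp (((2 * (j : ℕ) - 1 : ℕ) : ℂ) * Real.pi * Complex.I / 4)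

/-- The closed unit square `K₀` with vertices `q₁, q₂, q₃, q₄`. -/
def K0 : Set ℂ := convexHull ℝ {qpt 1, qpt 2, qpt 3, qpt 4}

/-- The digit set `S_l = {2 n l⁻¹ q_j : 0 ≤ n ≤ (l-1)/2, 1 ≤ j ≤ 4}`. -/
def Sdig (l : ℕ) : Set ℂ :=
  {z | ∃ n : ℕ, ∃ j : Fin 5, j ≠ 0 ∧ 2 * n ≤ l - 1 ∧
    z = ((2 * n : ℕ) : ℂ) / (l : ℂ) * qpt j}

/-- The elementary contraction `F_w^l(z) = w + l⁻¹ z`. -/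
def Fl (l : ℕ) (w z : ℂ) : ℂ := w + z / (l : ℂ)

/-- The composite contraction `F_w = F_{w₁}^{l₁} ∘ ⋯ ∘ F_{w_n}^{l_n}`. -/
def Fword (l : ℕ → ℕ) : (n : ℕ) → (Fin n → ℂ) → ℂ → ℂ
  | 0, _, z => z
  | n + 1, w, z => Fl (l 1) (w 0) (Fword (fun k => l (k + 1)) n (fun i => w i.succ) z)

/-- Admissible words: the `i`-th letter lies in `S_{l_{i+1}}`. -/
def IsWord (l : ℕ → ℕ) (n : ℕ) (w : Fin n → ℂ) : Prop :=
  ∀ i : Fin n, w i ∈ Sdig (l (i.val + 1))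

/-- The scale-irregular Vicsek set `K = ⋂_{n≥1} ⋃_{w ∈ W_n} F_w(K₀)`. -/
def VicsekK (l : ℕ → ℕ) : Set ℂ :=
  ⋂ n : ℕ, ⋃ w : Fin (n + 1) → ℂ, ⋃ _ : IsWord l (n + 1) w, Fword l (n + 1) w '' K0

/-- The cell `K_w = F_w(K₀) ∩ K`. -/
def cellK (l : ℕ → ℕ) (n : ℕ) (w : Fin n → ℂ) : Set ℂ :=
  Fword l n w '' K0 ∩ VicsekK l

/-- The vertex sets `V_0 = {q_j}`, `V_n = ⋃_{w ∈ W_n} F_w(V_0)`. -/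
def Vset (l : ℕ → ℕ) : ℕ → Set ℂ
  | 0 => Set.range qpt
  | n + 1 => ⋃ w : Fin (n + 1) → ℂ, ⋃ _ : IsWord l (n + 1) w,
      Fword l (n + 1) w '' Set.range qpt

/-- Adjacency in `V_n`: both points in `V_n` at distance `∏_{k=0}^n l_k⁻¹`. -/
def Adj (l : ℕ → ℕ) (n : ℕ) (x y : ℂ) : Prop :=
  x ∈ Vset l n ∧ y ∈ Vset l n ∧
    dist x y = ∏ k ∈ Finset.range (n + 1), ((l k : ℝ))⁻¹

/-- The discrete `p`-energy at level `n`: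
`E_{p,n}(u) = (1/2) (∏_{j=0}^n l_j^(p-1)) ∑_{x∼y ∈ V_n} |u(x)-u(y)|^p`. -/
def En (l : ℕ → ℕ) (p : ℝ) (n : ℕ) (u : ℂ → ℝ) : ℝ :=
  (1 / 2) * (∏ j ∈ Finset.range (n + 1), (l j : ℝ) ^ (p - 1)) *
    ∑' e : {e : ℂ × ℂ // Adj l n e.1 e.2}, |u e.val.1 - u e.val.2| ^ p

/-- Membership in the domain `F_p`: continuity on `K` together with
boundedness of the discrete energies (i.e. `sup_n E_{p,n}(u) < ∞`). -/
def MemFp (l : ℕ → ℕ) (p : ℝ) (u : ℂ → ℝ) : Prop :=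
  ContinuousOn u (VicsekK l) ∧ BddAbove (Set.range fun n => En l p n u)

/-- The `p`-energy `E_p(u) = sup_n E_{p,n}(u)`. -/
def Ep (l : ℕ → ℕ) (p : ℝ) (u : ℂ → ℝ) : ℝ := ⨆ n, En l p n u

/-- The standing assumptions on the scale sequence: `l₀ = 1` and each `l_k`
(`k ≥ 1`) is an odd integer `≥ 3`. -/
def GoodSeq (l : ℕ → ℕ) : Prop :=
  l 0 = 1 ∧ ∀ k, 1 ≤ k → 3 ≤ l k ∧ Odd (l k)

/-- `ρ_n = 2 ∏_{k=0}^n l_k⁻¹`. -/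
def rhon (l : ℕ → ℕ) (n : ℕ) : ℝ := 2 * ∏ k ∈ Finset.range (n + 1), ((l k : ℝ))⁻¹

/-- The index `n` such that `ρ_{n+1} < r ≤ ρ_n` (for `0 < r ≤ 2`). -/
def scaleIdx (l : ℕ → ℕ) (r : ℝ) : ℕ := sInf {m : ℕ | rhon l (m + 1) < r}

/-- `∏_{k=0}^n (2 l_k - 1)⁻¹`. -/
def psiN (l : ℕ → ℕ) (n : ℕ) : ℝ := ∏ k ∈ Finset.range (n + 1), (2 * (l k : ℝ) - 1)⁻¹

/-- The scale function `ψ`: for `ρ_{n+1} < r ≤ ρ_n`, `ψ(r) = ∏_{k=0}^n (2l_k-1)⁻¹`,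
and `ψ(r) = 1` for `r ≥ 2`. -/
def psi (l : ℕ → ℕ) (r : ℝ) : ℝ := if 2 ≤ r then 1 else psiN l (scaleIdx l r)

/-- `α_l = log(2l-1)/log l`. -/
def alphaExp (m : ℕ) : ℝ := Real.log (2 * (m : ℝ) - 1) / Real.log m

section PsiHelpers

variable {l : ℕ → ℕ}

lemma L_one_le (hl : GoodSeq l) (k : ℕ) : (1:ℝ) ≤ (l k : ℝ) := by
  rcases Nat.eq_zero_or_pos k with h | h
  · simp [h, hl.1]
  · have := (hl.2 k h).1
    exact_mod_cast by omega

lemma L_pos (hl : GoodSeq l) (k : ℕ) : (0:ℝ) < (l k : ℝ) :=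
  lt_of_lt_of_le zero_lt_one (L_one_le hl k)

lemma twoL_one_le (hl : GoodSeq l) (k : ℕ) : (1:ℝ) ≤ 2 * (l k : ℝ) - 1 := by
  have := L_one_le hl k; linarith

lemma rhon_pos (hl : GoodSeq l) (n : ℕ) : 0 < rhon l n :=
  mul_pos two_pos (Finset.prod_pos fun k _ => inv_pos.2 (L_pos hl k))

lemma rhon_zero (hl : GoodSeq l) : rhon l 0 = 2 := by
  simp [rhon, hl.1]

lemma rhon_succ (n : ℕ) : rhon l (n+1) = rhon l n * ((l (n+1) : ℝ))⁻¹ := by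
  simp only [rhon, Finset.prod_range_succ]
  ring

lemma rhon_le_geom (hl : GoodSeq l) (n : ℕ) : rhon l n ≤ 2 * ((1:ℝ)/3) ^ n := by
  induction n with
  | zero => simp [rhon_zero hl]
  | succ n ih =>
    have h3 : (3:ℝ) ≤ (l (n+1) : ℝ) := by
      have := (hl.2 (n+1) (by omega)).1; exact_mod_cast this
    have hinv : ((l (n+1) : ℝ))⁻¹ ≤ (1:ℝ)/3 := by
      rw [one_div]
      exact inv_anti₀ (by norm_num) h3
    calc rhon l (n+1) = rhon l n * ((l (n+1) : ℝ))⁻¹ := rhon_succ n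
      _ ≤ (2 * ((1:ℝ)/3) ^ n) * ((1:ℝ)/3) := by
          apply mul_le_mul ih hinv (by positivity) (by positivity)
      _ = 2 * ((1:ℝ)/3) ^ (n+1) := by ring

lemma scale_set_nonempty (hl : GoodSeq l) {r : ℝ} (hr : 0 < r) :
    {m : ℕ | rhon l (m + 1) < r}.Nonempty := by
  obtain ⟨n, hn⟩ := exists_pow_lt_of_lt_one (show 0 < r/2 by linarith)
    (show (1:ℝ)/3 < 1 by norm_num)
  refine ⟨n, ?_⟩
  have h1 : ((1:ℝ)/3) ^ (n+1) ≤ ((1:ℝ)/3) ^ n :=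
    pow_le_pow_of_le_one (by norm_num) (by norm_num) (by omega)
  have := rhon_le_geom hl (n+1)
  simp only [Set.mem_setOf_eq]
  linarith

lemma rhon_scaleIdx_lt (hl : GoodSeq l) {r : ℝ} (hr : 0 < r) :
    rhon l (scaleIdx l r + 1) < r :=
  Nat.sInf_mem (scale_set_nonempty hl hr)

lemma le_rhon_scaleIdx (hl : GoodSeq l) {r : ℝ} (hr2 : r ≤ 2) :
    r ≤ rhon l (scaleIdx l r) := by
  rcases h : scaleIdx l r with _ | k
  · rw [rhon_zero hl]; exact hr2
  · have hk : k < scaleIdx l r := by omega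
    have := Nat.notMem_of_lt_sInf (show k < sInf {m : ℕ | rhon l (m + 1) < r} from hk)
    simp only [Set.mem_setOf_eq, not_lt] at this
    exact this

lemma scaleIdx_le (hl : GoodSeq l) {r R : ℝ} (hr : 0 < r) (hrR : r ≤ R) :
    scaleIdx l R ≤ scaleIdx l r := by
  apply Nat.sInf_le
  exact lt_of_lt_of_le (rhon_scaleIdx_lt hl hr) hrR

lemma psiN_pos (hl : GoodSeq l) (n : ℕ) : 0 < psiN l n :=
  Finset.prod_pos fun k _ => inv_pos.2 (lt_of_lt_of_le zero_lt_one (twoL_one_le hl k))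

lemma psi_eq (hl : GoodSeq l) {r : ℝ} (hr : 0 < r) (hr2 : r ≤ 2) :
    psi l r = psiN l (scaleIdx l r) := by
  unfold psi
  split_ifs with h
  · have hr2' : r = 2 := le_antisymm hr2 h
    subst hr2'
    have h0 : scaleIdx l 2 = 0 := by
      have h3 : (3:ℝ) ≤ (l 1 : ℝ) := by
        have := (hl.2 1 le_rfl).1; exact_mod_cast this
      have hmem : (0:ℕ) ∈ {m : ℕ | rhon l (m + 1) < 2} := by
        simp only [Set.mem_setOf_eq]
        rw [rhon_succ, rhon_zero hl]
        have hinv : ((l 1 : ℝ))⁻¹ ≤ (1:ℝ)/3 := by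
          rw [one_div]; exact inv_anti₀ (by norm_num) h3
        nlinarith
      exact Nat.sInf_eq_zero.2 (Or.inl hmem)
    rw [h0]
    simp [psiN, hl.1]
    norm_num
  · rfl

lemma psiN_div (hl : GoodSeq l) {m n : ℕ} (h : m ≤ n) :
    psiN l m / psiN l n = ∏ k ∈ Finset.Ico (m+1) (n+1), (2 * (l k : ℝ) - 1) := by
  have key : psiN l m * ∏ k ∈ Finset.Ico (m+1) (n+1), (2 * (l k : ℝ) - 1)⁻¹ = psiN l n :=
    Finset.prod_range_mul_prod_Ico _ (by omega)
  have hQ : (0:ℝ) < ∏ k ∈ Finset.Ico (m+1) (n+1), (2 * (l k : ℝ) - 1) :=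
    Finset.prod_pos fun k _ => lt_of_lt_of_le zero_lt_one (twoL_one_le hl k)
  have hm0 := psiN_pos hl m
  rw [← key, Finset.prod_inv_distrib]
  field_simp

lemma rhon_div (hl : GoodSeq l) {m n : ℕ} (h : m ≤ n) :
    rhon l m / rhon l n = ∏ k ∈ Finset.Ico (m+1) (n+1), (l k : ℝ) := by
  have key : (∏ k ∈ Finset.range (m+1), ((l k : ℝ))⁻¹) *
      ∏ k ∈ Finset.Ico (m+1) (n+1), ((l k : ℝ))⁻¹ =
      ∏ k ∈ Finset.range (n+1), ((l k : ℝ))⁻¹ :=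
    Finset.prod_range_mul_prod_Ico _ (by omega)
  have hP : (0:ℝ) < ∏ k ∈ Finset.Ico (m+1) (n+1), (l k : ℝ) :=
    Finset.prod_pos fun k _ => L_pos hl k
  have hone : (∏ k ∈ Finset.Ico (m+1) (n+1), ((l k : ℝ))⁻¹) *
      (∏ k ∈ Finset.Ico (m+1) (n+1), (l k : ℝ)) = 1 := by
    rw [Finset.prod_inv_distrib, inv_mul_cancel₀ hP.ne']
  have key2 : rhon l n * (∏ k ∈ Finset.Ico (m+1) (n+1), (l k : ℝ)) = rhon l m := by
    unfold rhon
    rw [← key, mul_assoc, mul_assoc, hone, mul_one]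
  rw [← key2, mul_comm, mul_div_assoc, div_self (rhon_pos hl n).ne', mul_one]

lemma alphaExp_ge_one {m : ℕ} (hm : 3 ≤ m) : 1 ≤ alphaExp m := by
  have hm1 : (1:ℝ) < (m : ℝ) := by exact_mod_cast by omega
  have hlog : 0 < Real.log m := Real.log_pos hm1
  rw [alphaExp, le_div_iff₀ hlog, one_mul]
  exact Real.log_le_log (by linarith) (by linarith)

lemma alphaExp_le_two {m : ℕ} (hm : 3 ≤ m) : alphaExp m ≤ 2 := by
  have hm1 : (1:ℝ) < (m : ℝ) := by exact_mod_cast by omega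
  have hlog : 0 < Real.log m := Real.log_pos hm1
  rw [alphaExp, div_le_iff₀ hlog]
  have h1 : 2 * (m:ℝ) - 1 ≤ (m:ℝ) * (m:ℝ) := by nlinarith
  calc Real.log (2 * (m:ℝ) - 1) ≤ Real.log ((m:ℝ) * (m:ℝ)) :=
        Real.log_le_log (by linarith) h1
    _ = 2 * Real.log m := by
        rw [Real.log_mul (by linarith) (by linarith)]; ring

lemma rpow_alphaExp {m : ℕ} (hm : 3 ≤ m) : (m:ℝ) ^ alphaExp m = 2 * (m:ℝ) - 1 := by
  have hm1 : (1:ℝ) < (m : ℝ) := by exact_mod_cast by omega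
  have hlog : 0 < Real.log m := Real.log_pos hm1
  rw [Real.rpow_def_of_pos (by linarith), alphaExp]
  rw [mul_comm, div_mul_cancel₀ _ (ne_of_gt hlog)]
  exact Real.exp_log (by linarith)

end PsiHelpers

/-- If `sup_{n≥1} l_n < ∞` then
`c₁ (R/r)^(inf α_{l_n}) ≤ ψ(R)/ψ(r) ≤ c₂ (R/r)^(sup α_{l_n})` for `0 < r < R ≤ 2`. -/
theorem psi_scaling (l : ℕ → ℕ) (hl : GoodSeq l)
    (M : ℕ) (hM : ∀ n, 1 ≤ n → l n ≤ M) :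
    ∃ c₁ c₂ : ℝ, 0 < c₁ ∧ 0 < c₂ ∧ ∀ r R : ℝ, 0 < r → r < R → R ≤ 2 →
      c₁ * (R / r) ^ (⨅ n : ℕ, alphaExp (l (n + 1))) ≤ psi l R / psi l r ∧
      psi l R / psi l r ≤ c₂ * (R / r) ^ (⨆ n : ℕ, alphaExp (l (n + 1))) := by
  have hM3 : 3 ≤ M := le_trans (hl.2 1 le_rfl).1 (hM 1 le_rfl)
  have hM1 : (1:ℝ) ≤ (M:ℝ) := by exact_mod_cast by omega
  have hM0 : (0:ℝ) < (M:ℝ) := by linarith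
  have hl3 : ∀ n : ℕ, 3 ≤ l (n+1) := fun n => (hl.2 (n+1) (by omega)).1
  have hbdd_below : BddBelow (Set.range fun n : ℕ => alphaExp (l (n+1))) :=
    ⟨1, by rintro x ⟨n, rfl⟩; exact alphaExp_ge_one (hl3 n)⟩
  have hbdd_above : BddAbove (Set.range fun n : ℕ => alphaExp (l (n+1))) :=
    ⟨2, by rintro x ⟨n, rfl⟩; exact alphaExp_le_two (hl3 n)⟩
  set A := ⨅ n : ℕ, alphaExp (l (n+1)) with hA
  set B := ⨆ n : ℕ, alphaExp (l (n+1)) with hB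
  have hA1 : 1 ≤ A := le_ciInf fun n => alphaExp_ge_one (hl3 n)
  have hA2 : A ≤ 2 := le_trans (ciInf_le hbdd_below 0) (alphaExp_le_two (hl3 0))
  have hB2 : B ≤ 2 := ciSup_le fun n => alphaExp_le_two (hl3 n)
  have hB1 : 1 ≤ B := le_trans (alphaExp_ge_one (hl3 0)) (le_ciSup hbdd_above 0)
  refine ⟨((M:ℝ) ^ (2:ℝ))⁻¹, (M:ℝ) ^ (2:ℝ), by positivity, by positivity, ?_⟩
  intro r R hr hrR hR2
  have hR0 : 0 < R := hr.trans hrR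
  have hr2 : r ≤ 2 := le_of_lt (lt_of_lt_of_le hrR hR2)
  set m := scaleIdx l R with hmdef
  set n := scaleIdx l r with hndef
  have hmn : m ≤ n := scaleIdx_le hl hr (le_of_lt hrR)
  set P := ∏ k ∈ Finset.Ico (m+1) (n+1), (l k : ℝ) with hPdef
  set Q := ∏ k ∈ Finset.Ico (m+1) (n+1), (2 * (l k : ℝ) - 1) with hQdef
  have hP1 : (1:ℝ) ≤ P := by
    rw [hPdef]
    calc (1:ℝ) = ∏ _k ∈ Finset.Ico (m+1) (n+1), (1:ℝ) := by simp
      _ ≤ ∏ k ∈ Finset.Ico (m+1) (n+1), (l k : ℝ) :=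
          Finset.prod_le_prod (by simp) (fun k _ => L_one_le hl k)
  have hP0 : (0:ℝ) < P := lt_of_lt_of_le zero_lt_one hP1
  have hψ : psi l R / psi l r = Q := by
    rw [psi_eq hl hR0 hR2, psi_eq hl hr hr2]
    exact psiN_div hl hmn
  have hfac : ∀ k ∈ Finset.Ico (m+1) (n+1),
      (l k : ℝ) ^ A ≤ 2 * (l k : ℝ) - 1 ∧ 2 * (l k : ℝ) - 1 ≤ (l k : ℝ) ^ B := by
    intro k hk
    obtain ⟨j, rfl⟩ : ∃ j, k = j + 1 := ⟨k - 1, by have := (Finset.mem_Ico.1 hk).1; omega⟩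
    have h3 := hl3 j
    have h1 : (1:ℝ) ≤ (l (j+1) : ℝ) := L_one_le hl (j+1)
    constructor
    · calc ((l (j+1):ℝ)) ^ A ≤ ((l (j+1):ℝ)) ^ alphaExp (l (j+1)) :=
            Real.rpow_le_rpow_of_exponent_le h1 (ciInf_le hbdd_below j)
        _ = 2 * (l (j+1):ℝ) - 1 := rpow_alphaExp h3
    · calc 2 * (l (j+1):ℝ) - 1 = ((l (j+1):ℝ)) ^ alphaExp (l (j+1)) := (rpow_alphaExp h3).symm
        _ ≤ ((l (j+1):ℝ)) ^ B := Real.rpow_le_rpow_of_exponent_le h1 (le_ciSup hbdd_above j)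
  have hQA : P ^ A ≤ Q := by
    rw [hPdef, ← Real.finset_prod_rpow _ _ (fun k _ => le_of_lt (L_pos hl k))]
    exact Finset.prod_le_prod (fun k _ => Real.rpow_nonneg (le_of_lt (L_pos hl k)) _)
      (fun k hk => (hfac k hk).1)
  have hQB : Q ≤ P ^ B := by
    rw [hPdef, ← Real.finset_prod_rpow _ _ (fun k _ => le_of_lt (L_pos hl k))]
    exact Finset.prod_le_prod (fun k hk => by have := twoL_one_le hl k; linarith)
      (fun k hk => (hfac k hk).2)
  have hlM : ∀ k : ℕ, (l (k+1) : ℝ) ≤ (M:ℝ) := fun k => by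
    exact_mod_cast hM (k+1) (by omega)
  have hRr0 : (0:ℝ) ≤ R / r := by positivity
  have hRr1 : R / r ≤ P * (M:ℝ) := by
    have h1 : R / r ≤ rhon l m / rhon l (n+1) :=
      div_le_div₀ (rhon_pos hl m).le (le_rhon_scaleIdx hl hR2)
        (rhon_pos hl (n+1)) (rhon_scaleIdx_lt hl hr).le
    have h2 : rhon l m / rhon l (n+1) = P * (l (n+1) : ℝ) := by
      rw [rhon_div hl (Nat.le_succ_of_le hmn), Finset.prod_Ico_succ_top (by omega)]
    have h3 : P * (l (n+1) : ℝ) ≤ P * (M:ℝ) :=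
      mul_le_mul_of_nonneg_left (hlM n) hP0.le
    linarith
  have hRr2 : P ≤ (R / r) * (M:ℝ) := by
    have h1 : rhon l (m+1) / rhon l n ≤ R / r :=
      div_le_div₀ hR0.le (rhon_scaleIdx_lt hl hR0).le hr (le_rhon_scaleIdx hl hr2)
    have h2 : rhon l (m+1) / rhon l n = P * ((l (m+1) : ℝ))⁻¹ := by
      rw [rhon_succ, mul_comm (rhon l m), mul_div_assoc, rhon_div hl hmn, ← hPdef,
        mul_comm]
    have h4 : P ≤ (R / r) * (l (m+1) : ℝ) := by
      rw [h2] at h1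
      rw [mul_inv_le_iff₀ (L_pos hl (m+1))] at h1
      linarith [mul_comm (R / r) ((l (m+1) : ℝ))]
    calc P ≤ (R / r) * (l (m+1) : ℝ) := h4
      _ ≤ (R / r) * (M:ℝ) := mul_le_mul_of_nonneg_left (hlM m) hRr0
  constructor
  · calc ((M:ℝ)^(2:ℝ))⁻¹ * (R/r)^A
        ≤ ((M:ℝ)^(2:ℝ))⁻¹ * ((P*(M:ℝ))^A) := by
          apply mul_le_mul_of_nonneg_left
            (Real.rpow_le_rpow hRr0 hRr1 (by linarith)) (by positivity)
      _ = ((M:ℝ)^(2:ℝ))⁻¹ * (P^A * (M:ℝ)^A) := by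
          rw [Real.mul_rpow hP0.le hM0.le]
      _ ≤ ((M:ℝ)^(2:ℝ))⁻¹ * (P^A * (M:ℝ)^(2:ℝ)) := by
          apply mul_le_mul_of_nonneg_left
            (mul_le_mul_of_nonneg_left
              (Real.rpow_le_rpow_of_exponent_le hM1 hA2) (by positivity))
            (by positivity)
      _ = P^A := by
          have : ((M:ℝ)^(2:ℝ)) ≠ 0 := by positivity
          field_simp
      _ ≤ Q := hQA
      _ = psi l R / psi l r := hψ.symm
  · calc psi l R / psi l r = Q := hψ
      _ ≤ P ^ B := hQB
      _ ≤ ((R/r) * (M:ℝ)) ^ B := Real.rpow_le_rpow hP0.le hRr2 (by linarith)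
      _ = (R/r)^B * (M:ℝ)^B := Real.mul_rpow hRr0 hM0.le
      _ ≤ (R/r)^B * (M:ℝ)^(2:ℝ) :=
          mul_le_mul_of_nonneg_left
            (Real.rpow_le_rpow_of_exponent_le hM1 hB2) (by positivity)
      _ = (M:ℝ)^(2:ℝ) * (R/r)^B := mul_comm _ _

end
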